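/- arXiv:2109.12780 — 2 statements merged into one kernel-verified Lean document; each statement's English description precedes it below -/
import Mathlib

section
/- Let (X,d) be an A-uniform metric space with quasihyperbolic metric k. Then for all x, y ∈ X: log(1 + d(x,y)/min{d(x,∂X), d(y,∂X)}) ≤ k(x,y) ≤ 4A²·log(1 + d(x,y)/min{d(x,∂X), d(y,∂X)}). -/
open Set Metric Filter MeasureTheory

noncomputable section

variable {X : Type*} [MetricSpace X]

/-- Distance from a point of `X` to the metric boundary `∂X = X̄ ∖ X`,
computed in the metric completion of `X`. -/
def distBdry (x : X) : ℝ :=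
  Metric.infDist (x : UniformSpace.Completion X)
    ((Set.range ((↑) : X → UniformSpace.Completion X))ᶜ)

/-- `γ` is a unit-speed (arclength-parametrized) curve on `[0, L]`. -/
def UnitSpeedOn (γ : ℝ → X) (L : ℝ) : Prop :=
  ∀ a b : ℝ, 0 ≤ a → a ≤ b → b ≤ L →
    eVariationOn γ (Set.Icc a b) = ENNReal.ofReal (b - a)

/-- A unit-speed curve in `X` from `x` to `y` on `[0, L]`. -/
def IsArclengthCurve (γ : ℝ → X) (L : ℝ) (x y : X) : Prop :=
  0 ≤ L ∧ γ 0 = x ∧ γ L = y ∧ ContinuousOn γ (Set.Icc 0 L) ∧ UnitSpeedOn γ L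

/-- The quasihyperbolic metric of `X`: infimum over arclength-parametrized
curves of ∫ ds / d(·, ∂X). -/
def qhDistX (x y : X) : ℝ :=
  sInf {r | ∃ (L : ℝ) (γ : ℝ → X), IsArclengthCurve γ L x y ∧
    r = ∫ t in (0:ℝ)..L, 1 / distBdry (γ t)}

/-- `X` is an `A`-uniform space. -/
def IsUniformSpaceA (X : Type*) [MetricSpace X] (A : ℝ) : Prop :=
  ∀ x y : X, ∃ (L : ℝ) (γ : ℝ → X), IsArclengthCurve γ L x y ∧
    L ≤ A * dist x y ∧
    ∀ t ∈ Set.Icc (0:ℝ) L, min t (L - t) ≤ A * distBdry (γ t)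

/-! Along any arclength curve `γ` from `x` to `y` of length `L`, the boundary distance is
1-Lipschitz, so `distBdry (γ t) ≤ distBdry x + t` and the quasihyperbolic length of `γ` is at least
`∫₀ᴸ dt / (distBdry x + t) = log (1 + L / distBdry x)`, with `L ≥ d(x, y)`; reversing `γ` gives
the same bound with `y` in place of `x`.

For the upper bound take the uniform curve. With `m = min (distBdry x) (distBdry y)`, on its
first half `distBdry (γ t) ≥ max (m - t) (t / A) ≥ (m / 2 + t) / (2A)`, so each half contributes at
most `2A log (1 + L / m)`. Bernoulli's inequality `1 + A s ≤ (1 + s) ^ A` and `L ≤ A d(x, y)` turn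
`log (1 + L / m)` into at most `A log (1 + d(x, y) / m)`. -/

open UniformSpace (Completion)

theorem isOpen_range_coe_completion {Y : Type*} [PseudoMetricSpace Y] [LocallyCompactSpace Y] :
    IsOpen (range ((↑) : Y → Completion Y)) := by
  refine Metric.isOpen_iff.2 ?_
  rintro _ ⟨y, rfl⟩
  obtain ⟨r, hr, hcomp⟩ := exists_isCompact_closedBall y
  refine ⟨r, hr, ?_⟩
  have hsub : ball (y : Completion Y) r ∩ range ((↑) : Y → Completion Y) ⊆
      ((↑) : Y → Completion Y) '' closedBall y r := by
    rintro _ ⟨hz, z, rfl⟩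
    refine ⟨z, ?_, rfl⟩
    rw [mem_ball, Completion.dist_eq] at hz
    exact mem_closedBall.2 hz.le
  calc ball (y : Completion Y) r
      ⊆ closure (ball (y : Completion Y) r ∩ range ((↑) : Y → Completion Y)) :=
        Completion.denseRange_coe.open_subset_closure_inter isOpen_ball
    _ ⊆ (↑) '' closedBall y r :=
        closure_minimal hsub (hcomp.image (Completion.continuous_coe Y)).isClosed
    _ ⊆ range ((↑) : Y → Completion Y) := image_subset_range _ _

theorem distBdry_pos [LocallyCompactSpace X]
    (hnc : ((range ((↑) : X → Completion X))ᶜ).Nonempty) (x : X) :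
    0 < distBdry x := by
  rw [distBdry, ← infDist_pos_iff_notMem_closure hnc,
    isOpen_range_coe_completion.isClosed_compl.closure_eq, notMem_compl_iff]
  exact mem_range_self x

theorem distBdry_le_add_dist (x y : X) : distBdry x ≤ distBdry y + dist x y := by
  rw [← Completion.dist_eq]
  exact infDist_le_infDist_add_dist

theorem lipschitzWith_one_distBdry : LipschitzWith 1 (distBdry (X := X)) :=
  LipschitzWith.of_le_add distBdry_le_add_dist

theorem UnitSpeedOn.dist_le {γ : ℝ → X} {L : ℝ} (h : UnitSpeedOn γ L)
    {a b : ℝ} (ha : 0 ≤ a) (hab : a ≤ b) (hb : b ≤ L) : dist (γ a) (γ b) ≤ b - a := by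
  have hvar := eVariationOn.edist_le γ (left_mem_Icc.2 hab) (right_mem_Icc.2 hab)
  rw [h a b ha hab hb, edist_dist] at hvar
  exact (ENNReal.ofReal_le_ofReal_iff (sub_nonneg.2 hab)).1 hvar

namespace IsArclengthCurve

variable {γ : ℝ → X} {L : ℝ} {x y : X}

theorem dist_le_length (h : IsArclengthCurve γ L x y) : dist x y ≤ L := by
  obtain ⟨hL, rfl, rfl, -, hunit⟩ := h
  simpa using hunit.dist_le le_rfl hL le_rfl

theorem distBdry_le_add (h : IsArclengthCurve γ L x y) {t : ℝ} (ht : t ∈ Icc 0 L) :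
    distBdry (γ t) ≤ distBdry x + t := by
  obtain ⟨-, rfl, -, -, hunit⟩ := h
  have := hunit.dist_le le_rfl ht.1 ht.2
  linarith [distBdry_le_add_dist (γ t) (γ 0), dist_comm (γ t) (γ 0)]

theorem sub_le_distBdry (h : IsArclengthCurve γ L x y) {t : ℝ} (ht : t ∈ Icc 0 L) :
    distBdry x - t ≤ distBdry (γ t) := by
  obtain ⟨-, rfl, -, -, hunit⟩ := h
  have := hunit.dist_le le_rfl ht.1 ht.2
  linarith [distBdry_le_add_dist (γ 0) (γ t)]

theorem continuousOn_distBdry (h : IsArclengthCurve γ L x y) :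
    ContinuousOn (fun t => distBdry (γ t)) (Icc 0 L) :=
  lipschitzWith_one_distBdry.continuous.comp_continuousOn h.2.2.2.1

theorem reverse (h : IsArclengthCurve γ L x y) :
    IsArclengthCurve (fun t => γ (L - t)) L y x := by
  obtain ⟨hL, hγ0, hγL, hcont, hunit⟩ := h
  refine ⟨hL, by simpa using hγL, by simpa using hγ0, ?_, ?_⟩
  · refine hcont.comp (by fun_prop) fun t ht => ⟨?_, ?_⟩ <;> linarith [ht.1, ht.2]
  · intro a b ha hab hb
    have hanti : AntitoneOn (fun t => L - t) (Icc a b) := fun _ _ _ _ hst => by linarith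
    rw [show (fun t => γ (L - t)) = γ ∘ fun t => L - t from rfl,
      eVariationOn.comp_eq_of_antitoneOn γ _ hanti, image_const_sub_Icc,
      hunit _ _ (by linarith) (by linarith) (by linarith)]
    ring_nf

end IsArclengthCurve

theorem integral_one_div_const_add {c a : ℝ} (hc : 0 < c) (ha : 0 ≤ a) :
    ∫ t in (0:ℝ)..a, 1 / (c + t) = Real.log (1 + a / c) := by
  rw [intervalIntegral.integral_comp_add_left (fun u => 1 / u) c, add_zero,
    integral_one_div fun h => by rcases mem_uIcc.1 h with h | h <;> linarith [h.1, h.2]]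
  congr 1
  field_simp

theorem log_one_add_div_le_integral_one_div {f : ℝ → ℝ} {c a : ℝ} (hc : 0 < c) (ha : 0 ≤ a)
    (hf : ContinuousOn f (Icc 0 a)) (hpos : ∀ t ∈ Icc 0 a, 0 < f t)
    (hle : ∀ t ∈ Icc 0 a, f t ≤ c + t) :
    Real.log (1 + a / c) ≤ ∫ t in (0:ℝ)..a, 1 / f t := by
  rw [← integral_one_div_const_add hc ha]
  refine intervalIntegral.integral_mono_on ha ?_ ?_ fun t ht =>
    one_div_le_one_div_of_le (hpos t ht) (hle t ht)
  · refine ContinuousOn.intervalIntegrable ?_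
    rw [uIcc_of_le ha]
    exact continuousOn_const.div (by fun_prop) fun t ht => by linarith [ht.1]
  · refine ContinuousOn.intervalIntegrable ?_
    rw [uIcc_of_le ha]
    exact continuousOn_const.div hf fun t ht => (hpos t ht).ne'

theorem integral_one_div_le_mul_log_one_add_div {f : ℝ → ℝ} {c a K : ℝ} (hc : 0 < c)
    (ha : 0 ≤ a) (hf : ContinuousOn f (Icc 0 a)) (hpos : ∀ t ∈ Icc 0 a, 0 < f t)
    (hle : ∀ t ∈ Icc 0 a, c + t ≤ K * f t) :
    ∫ t in (0:ℝ)..a, 1 / f t ≤ K * Real.log (1 + a / c) := by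
  rw [← integral_one_div_const_add hc ha, ← intervalIntegral.integral_const_mul]
  refine intervalIntegral.integral_mono_on ha ?_ ?_ fun t ht => ?_
  · refine ContinuousOn.intervalIntegrable ?_
    rw [uIcc_of_le ha]
    exact continuousOn_const.div hf fun t ht => (hpos t ht).ne'
  · refine ContinuousOn.intervalIntegrable ?_
    rw [uIcc_of_le ha]
    exact continuousOn_const.mul
      (continuousOn_const.div (by fun_prop) fun t ht => by linarith [ht.1])
  · have hct : 0 < c + t := by linarith [ht.1]
    rw [mul_one_div, div_le_div_iff₀ (hpos t ht) hct, one_mul]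
    exact hle t ht

theorem log_one_add_le_mul_log_one_add {A s u : ℝ} (hA : 1 ≤ A) (hs : 0 ≤ s) (hu : 0 ≤ u)
    (hus : u ≤ A * s) : Real.log (1 + u) ≤ A * Real.log (1 + s) := by
  calc Real.log (1 + u) ≤ Real.log ((1 + s) ^ A) :=
        Real.log_le_log (by linarith) <|
          (add_le_add_right hus 1).trans (one_add_mul_self_le_rpow_one_add (by linarith) hA)
    _ = A * Real.log (1 + s) := Real.log_rpow (by linarith) A

namespace IsArclengthCurve

variable {γ : ℝ → X} {L : ℝ} {x y : X}

theorem intervalIntegrable_one_div_distBdry (hpos : ∀ z : X, 0 < distBdry z)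
    (h : IsArclengthCurve γ L x y) :
    IntervalIntegrable (fun t => 1 / distBdry (γ t)) volume 0 L := by
  refine ContinuousOn.intervalIntegrable ?_
  rw [uIcc_of_le h.1]
  exact continuousOn_const.div h.continuousOn_distBdry fun t _ => (hpos _).ne'

theorem log_one_add_dist_div_le_integral (hpos : ∀ z : X, 0 < distBdry z)
    (h : IsArclengthCurve γ L x y) :
    Real.log (1 + dist x y / distBdry x) ≤ ∫ t in (0:ℝ)..L, 1 / distBdry (γ t) := by
  have hx := hpos x
  refine (Real.log_le_log (by positivity) ?_).trans <|
    log_one_add_div_le_integral_one_div hx h.1 h.continuousOn_distBdry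
      (fun _ _ => hpos _) fun _ ht => h.distBdry_le_add ht
  gcongr
  exact h.dist_le_length

theorem log_one_add_dist_div_min_le_integral (hpos : ∀ z : X, 0 < distBdry z)
    (h : IsArclengthCurve γ L x y) :
    Real.log (1 + dist x y / min (distBdry x) (distBdry y)) ≤
      ∫ t in (0:ℝ)..L, 1 / distBdry (γ t) := by
  rcases min_choice (distBdry x) (distBdry y) with hmin | hmin <;> rw [hmin]
  · exact h.log_one_add_dist_div_le_integral hpos
  · have hrev := h.reverse.log_one_add_dist_div_le_integral hpos
    rwa [dist_comm, intervalIntegral.integral_comp_sub_left (fun t => 1 / distBdry (γ t)),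
      sub_self, sub_zero] at hrev

theorem integral_first_half_le {A m : ℝ} (hpos : ∀ z : X, 0 < distBdry z)
    (h : IsArclengthCurve γ L x y) (hA : 1 ≤ A)
    (hcigar : ∀ t ∈ Icc (0:ℝ) L, min t (L - t) ≤ A * distBdry (γ t))
    (hm : 0 < m) (hmx : m ≤ distBdry x) :
    ∫ t in (0:ℝ)..L / 2, 1 / distBdry (γ t) ≤ 2 * A * Real.log (1 + L / m) := by
  have hhalf : Icc 0 (L / 2) ⊆ Icc 0 L := Icc_subset_Icc le_rfl (by linarith [h.1])
  have hbound := integral_one_div_le_mul_log_one_add_div (c := m / 2) (K := 2 * A) (half_pos hm)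
    (by linarith [h.1]) (h.continuousOn_distBdry.mono hhalf) (fun _ _ => hpos _) fun t ht => by
      have hfar : m - t ≤ distBdry (γ t) := by linarith [h.sub_le_distBdry (hhalf ht)]
      have hnear : t ≤ A * distBdry (γ t) := by
        simpa [min_eq_left (by linarith [ht.2] : t ≤ L - t)] using hcigar t (hhalf ht)
      rcases le_total m (2 * t) with hmt | hmt <;> nlinarith [hpos (γ t)]
  rwa [div_div_div_cancel_right₀ two_ne_zero] at hbound

theorem integral_le_mul_log {A m : ℝ} (hpos : ∀ z : X, 0 < distBdry z)
    (h : IsArclengthCurve γ L x y) (hA : 1 ≤ A)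
    (hcigar : ∀ t ∈ Icc (0:ℝ) L, min t (L - t) ≤ A * distBdry (γ t))
    (hm : 0 < m) (hmx : m ≤ distBdry x) (hmy : m ≤ distBdry y) :
    ∫ t in (0:ℝ)..L, 1 / distBdry (γ t) ≤ 4 * A * Real.log (1 + L / m) := by
  have hfirst := h.integral_first_half_le hpos hA hcigar hm hmx
  have hsecond := h.reverse.integral_first_half_le hpos hA
    (fun t ht => by
      simpa [min_comm] using hcigar (L - t) ⟨by linarith [ht.2], by linarith [ht.1]⟩) hm hmy
  rw [intervalIntegral.integral_comp_sub_left (fun t => 1 / distBdry (γ t)), sub_zero,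
    sub_half] at hsecond
  have hL2 : L / 2 ∈ uIcc 0 L := by rw [uIcc_of_le h.1]; constructor <;> linarith [h.1]
  have hint := h.intervalIntegrable_one_div_distBdry hpos
  rw [← intervalIntegral.integral_add_adjacent_intervals
    (hint.mono_set (uIcc_subset_uIcc_left hL2)) (hint.mono_set (uIcc_subset_uIcc_right hL2))]
  linarith

end IsArclengthCurve

theorem stmt1 {X : Type*} [MetricSpace X] [LocallyCompactSpace X]
    (hnc : ((Set.range ((↑) : X → UniformSpace.Completion X))ᶜ).Nonempty)
    {A : ℝ} (hA : 1 ≤ A) (hunif : IsUniformSpaceA X A) :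
    ∀ x y : X,
      Real.log (1 + dist x y / min (distBdry x) (distBdry y)) ≤ qhDistX x y ∧
      qhDistX x y ≤ 4 * A ^ 2 *
        Real.log (1 + dist x y / min (distBdry x) (distBdry y)) := by
  intro x y
  have hpos : ∀ z : X, 0 < distBdry z := distBdry_pos hnc
  have hm : 0 < min (distBdry x) (distBdry y) := lt_min (hpos x) (hpos y)
  have hlower : ∀ r ∈ {r | ∃ (L : ℝ) (γ : ℝ → X), IsArclengthCurve γ L x y ∧
      r = ∫ t in (0:ℝ)..L, 1 / distBdry (γ t)},
      Real.log (1 + dist x y / min (distBdry x) (distBdry y)) ≤ r := by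
    rintro _ ⟨L, γ, hγ, rfl⟩
    exact hγ.log_one_add_dist_div_min_le_integral hpos
  obtain ⟨L, γ, hγ, hLd, hcigar⟩ := hunif x y
  refine ⟨le_csInf ⟨_, L, γ, hγ, rfl⟩ hlower, (csInf_le ⟨_, hlower⟩ ⟨L, γ, hγ, rfl⟩).trans ?_⟩
  calc ∫ t in (0:ℝ)..L, 1 / distBdry (γ t)
      ≤ 4 * A * Real.log (1 + L / min (distBdry x) (distBdry y)) :=
        hγ.integral_le_mul_log hpos hA hcigar hm (min_le_left _ _) (min_le_right _ _)
    _ ≤ 4 * A * (A * Real.log (1 + dist x y / min (distBdry x) (distBdry y))) := by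
        gcongr
        refine log_one_add_le_mul_log_one_add hA (by positivity) (div_nonneg hγ.1 hm.le) ?_
        rw [mul_div_assoc']
        exact div_le_div_of_nonneg_right hLd hm.le
    _ = 4 * A ^ 2 * Real.log (1 + dist x y / min (distBdry x) (distBdry y)) := by ring
end
end

section
/- Let X be a δ-hyperbolic space with Busemann function b based at ξ ∈ ∂∞X, and define the Gromov product based at b by (x|y)_b = (b(x)+b(y)−d(x,y))/2. Then for all x, y ∈ X: (x|y)_b − 10δ ≤ (x|y)_o − (x|ξ)_o − (y|ξ)_o ≤ (x|y)_b + 10δ. -/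
open Set Metric Filter

noncomputable section

/-- Gromov product (x|y)_o. -/
def gp {X : Type*} [MetricSpace X] (o x y : X) : ℝ :=
  (dist x o + dist y o - dist x y) / 2

/-- `X` is Gromov δ-hyperbolic. -/
def IsGromovHyp (X : Type*) [MetricSpace X] (δ : ℝ) : Prop :=
  ∀ o x y z : X, min (gp o x z) (gp o z y) - δ ≤ gp o x y

/-- A Gromov sequence: (x_i | x_j)_o → ∞. -/
def IsGromovSeq {X : Type*} [MetricSpace X] (o : X) (s : ℕ → X) : Prop :=
  Tendsto (fun p : ℕ × ℕ => gp o (s p.1) (s p.2)) atTop atTop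

/-- Equivalence of Gromov sequences: (x_i | y_i)_o → ∞. -/
def GromovEquiv {X : Type*} [MetricSpace X] (o : X) (s t : ℕ → X) : Prop :=
  Tendsto (fun i => gp o (s i) (t i)) atTop atTop

/-- Gromov product (x|ξ)_p of a point and a boundary point (represented by the
Gromov sequence `ξ`), defined as the infimum over representatives of the class
of `ξ` of the liminf of Gromov products. -/
def gpPt {X : Type*} [MetricSpace X] (o p x : X) (ξ : ℕ → X) : ℝ :=
  sInf {r | ∃ s : ℕ → X, IsGromovSeq o s ∧ GromovEquiv o ξ s ∧
    r = liminf (fun i => gp p x (s i)) atTop}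

/-- Gromov product (ξ|ζ)_p of two boundary points. -/
def gpPt2 {X : Type*} [MetricSpace X] (o p : X) (ξ ζ : ℕ → X) : ℝ :=
  sInf {r | ∃ s t : ℕ → X, IsGromovSeq o s ∧ IsGromovSeq o t ∧
    GromovEquiv o ξ s ∧ GromovEquiv o ζ t ∧
    r = liminf (fun i => gp p (s i) (t i)) atTop}

/-- The Busemann function based at the boundary point `ξ`:
`b(x) = (o|ξ)_x − (x|ξ)_o`. -/
def bus {X : Type*} [MetricSpace X] (o : X) (ξ : ℕ → X) (x : X) : ℝ :=
  gpPt o x o ξ - gpPt o o x ξ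

/-- The Gromov product based at the Busemann function `b` of `ξ`:
`(x|y)_b = (b(x)+b(y)−d(x,y))/2`. -/
def gpb {X : Type*} [MetricSpace X] (o : X) (ξ : ℕ → X) (x y : X) : ℝ :=
  (bus o ξ x + bus o ξ y - dist x y) / 2

/-- The Gromov product based at `b` of two boundary points. -/
def gpbBdry {X : Type*} [MetricSpace X] (o : X) (ξ η ζ : ℕ → X) : ℝ :=
  sInf {r | ∃ s t : ℕ → X, IsGromovSeq o s ∧ IsGromovSeq o t ∧
    GromovEquiv o η s ∧ GromovEquiv o ζ t ∧
    r = liminf (fun i => gpb o ξ (s i) (t i)) atTop}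

/-!
Hyperbolicity makes the liminf and the limsup of `(x|t_i)_o` agree up to `δ` along all
sequences `t` equivalent to `ξ`. Since `(o|t_i)_x + (x|t_i)_o = d(x,o)`, this gives
`(o|ξ)_x + (x|ξ)_o = d(x,o)` up to `δ`, i.e. `b(x) = d(x,o) − 2(x|ξ)_o` up to `δ`.
Substituting this into `(x|y)_b = (b(x)+b(y)−d(x,y))/2` and comparing with
`(x|y)_o = (d(x,o)+d(y,o)−d(x,y))/2` yields the claim, even with error `δ`.
-/

section GromovProduct

variable {X : Type*} [MetricSpace X]

lemma gp_nonneg (o x y : X) : 0 ≤ gp o x y := by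
  have := dist_triangle x o y
  rw [dist_comm o y] at this
  unfold gp; linarith

lemma gp_le_dist_left (o x y : X) : gp o x y ≤ dist x o := by
  have := dist_triangle y x o
  rw [dist_comm y x] at this
  unfold gp; linarith

lemma gp_comm (o x y : X) : gp o x y = gp o y x := by
  unfold gp; rw [dist_comm x y]; ring

lemma gp_swap_add_gp (o x z : X) : gp x o z + gp o x z = dist x o := by
  unfold gp
  rw [dist_comm o x, dist_comm z x, dist_comm z o]
  ring

lemma isBoundedUnder_le_gp (p q : X) (u : ℕ → X) :
    IsBoundedUnder (· ≤ ·) atTop (fun i => gp p q (u i)) :=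
  isBoundedUnder_of ⟨dist q p, fun i => gp_le_dist_left p q (u i)⟩

lemma isBoundedUnder_ge_gp (p q : X) (u : ℕ → X) :
    IsBoundedUnder (· ≥ ·) atTop (fun i => gp p q (u i)) :=
  isBoundedUnder_of ⟨0, fun i => gp_nonneg p q (u i)⟩

lemma liminf_gp_swap (o x : X) (t : ℕ → X) :
    liminf (fun i => gp x o (t i)) atTop = dist x o - limsup (fun i => gp o x (t i)) atTop := by
  have hswap : (fun i => gp x o (t i)) = fun i => dist x o - gp o x (t i) := by
    funext i
    linarith [gp_swap_add_gp o x (t i)]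
  rw [hswap]
  exact liminf_const_sub atTop _ _ (isBoundedUnder_le_gp o x t)
    (isBoundedUnder_ge_gp o x t).isCoboundedUnder_le

lemma IsGromovSeq.gromovEquiv_self {o : X} {ξ : ℕ → X} (hξ : IsGromovSeq o ξ) :
    GromovEquiv o ξ ξ :=
  hξ.comp tendsto_atTop_diagonal

end GromovProduct

namespace IsGromovHyp

variable {X : Type*} [MetricSpace X] {δ : ℝ}

lemma nonneg [Nonempty X] (hX : IsGromovHyp X δ) : 0 ≤ δ := by
  obtain ⟨o⟩ := ‹Nonempty X›
  have := hX o o o o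
  simp only [gp, dist_self, min_self] at this
  linarith

lemma le_gp (hX : IsGromovHyp X δ) {o x y z : X} {C : ℝ} (hxz : C ≤ gp o x z)
    (hzy : C ≤ gp o z y) : C - δ ≤ gp o x y :=
  (sub_le_sub_right (le_min hxz hzy) δ).trans (hX o x y z)

lemma tendsto_gp_of_gromovEquiv (hX : IsGromovHyp X δ) {o : X} {ξ s t : ℕ → X}
    (hξ : IsGromovSeq o ξ) (hs : GromovEquiv o ξ s) (ht : GromovEquiv o ξ t) :
    Tendsto (fun p : ℕ × ℕ => gp o (s p.1) (t p.2)) atTop atTop := by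
  refine tendsto_atTop.2 fun C => ?_
  have hξC := hξ.eventually_ge_atTop (C + 2 * δ)
  rw [← prod_atTop_atTop_eq] at hξC ⊢
  filter_upwards [(hs.eventually_ge_atTop (C + δ)).prod_inl atTop,
    (ht.eventually_ge_atTop (C + 2 * δ)).prod_inr atTop, hξC] with ⟨i, j⟩ hsi htj hξij
  have hξt : C + δ ≤ gp o (ξ i) (t j) := by linarith [hX.le_gp hξij htj]
  linarith [hX.le_gp (gp_comm o (ξ i) (s i) ▸ hsi) hξt]

lemma limsup_gp_le_liminf_gp_add (hX : IsGromovHyp X δ) {o x : X} {ξ s t : ℕ → X}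
    (hξ : IsGromovSeq o ξ) (hs : GromovEquiv o ξ s) (ht : GromovEquiv o ξ t) :
    limsup (fun i => gp o x (t i)) atTop ≤ liminf (fun i => gp o x (s i)) atTop + δ := by
  obtain ⟨⟨N, M⟩, hNM⟩ := eventually_atTop.1
    ((hX.tendsto_gp_of_gromovEquiv hξ ht hs).eventually_ge_atTop (dist x o))
  refine limsup_le_of_le (isBoundedUnder_ge_gp o x t).isCoboundedUnder_le
    (eventually_atTop.2 ⟨N, fun i hi => ?_⟩)
  -- once `(t_i|s_j)_o ≥ d(x,o) ≥ (x|t_i)_o`, hyperbolicity bounds `(x|s_j)_o` below by `(x|t_i)_o − δ`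
  suffices gp o x (t i) - δ ≤ liminf (fun j => gp o x (s j)) atTop by linarith
  refine le_liminf_of_le (isBoundedUnder_le_gp o x s).isCoboundedUnder_ge
    (eventually_atTop.2 ⟨M, fun j hj => hX.le_gp le_rfl ?_⟩)
  exact (gp_le_dist_left o x (t i)).trans (hNM (i, j) (Prod.mk_le_mk.2 ⟨hi, hj⟩))

end IsGromovHyp

section BoundaryProduct

variable {X : Type*} [MetricSpace X]

lemma gpPt_le_liminf (o p x : X) {ξ s : ℕ → X} (hs : IsGromovSeq o s)
    (hξs : GromovEquiv o ξ s) :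
    gpPt o p x ξ ≤ liminf (fun i => gp p x (s i)) atTop := by
  refine csInf_le ⟨0, ?_⟩ ⟨s, hs, hξs, rfl⟩
  rintro r ⟨u, -, -, rfl⟩
  exact le_liminf_of_le (isBoundedUnder_le_gp p x u).isCoboundedUnder_ge
    (.of_forall fun i => gp_nonneg p x (u i))

lemma le_gpPt (o p x : X) {ξ : ℕ → X} (hξ : IsGromovSeq o ξ) {a : ℝ}
    (h : ∀ s : ℕ → X, IsGromovSeq o s → GromovEquiv o ξ s →
      a ≤ liminf (fun i => gp p x (s i)) atTop) :
    a ≤ gpPt o p x ξ := by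
  refine le_csInf ⟨_, ξ, hξ, hξ.gromovEquiv_self, rfl⟩ ?_
  rintro r ⟨s, hs, hξs, rfl⟩
  exact h s hs hξs

lemma bus_le (o x : X) {ξ : ℕ → X} (hξ : IsGromovSeq o ξ) :
    bus o ξ x ≤ dist x o - 2 * gpPt o o x ξ := by
  have hox := gpPt_le_liminf o x o hξ hξ.gromovEquiv_self
  have hxo := gpPt_le_liminf o o x hξ hξ.gromovEquiv_self
  rw [liminf_gp_swap] at hox
  have := liminf_le_limsup (isBoundedUnder_le_gp o x ξ) (isBoundedUnder_ge_gp o x ξ)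
  unfold bus
  linarith

lemma IsGromovHyp.le_bus {δ : ℝ} (hX : IsGromovHyp X δ) (o x : X) {ξ : ℕ → X}
    (hξ : IsGromovSeq o ξ) :
    dist x o - 2 * gpPt o o x ξ - δ ≤ bus o ξ x := by
  have hox : dist x o - (gpPt o o x ξ + δ) ≤ gpPt o x o ξ := by
    refine le_gpPt o x o hξ fun t _ hξt => ?_
    have : limsup (fun i => gp o x (t i)) atTop - δ ≤ gpPt o o x ξ :=
      le_gpPt o o x hξ fun s _ hξs => by
        linarith [hX.limsup_gp_le_liminf_gp_add (x := x) hξ hξs hξt]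
    rw [liminf_gp_swap]
    linarith
  unfold bus
  linarith

end BoundaryProduct

theorem stmt4_general {X : Type*} [MetricSpace X] {δ : ℝ} (hX : IsGromovHyp X δ)
    (o : X) (ξ : ℕ → X) (hξ : IsGromovSeq o ξ) :
    ∀ x y : X,
      gpb o ξ x y - 10 * δ ≤ gp o x y - gpPt o o x ξ - gpPt o o y ξ ∧
      gp o x y - gpPt o o x ξ - gpPt o o y ξ ≤ gpb o ξ x y + 10 * δ := by
  intro x y
  have : Nonempty X := ⟨o⟩
  have hδ := hX.nonneg
  have := bus_le o x hξ
  have := bus_le o y hξ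
  have := hX.le_bus o x hξ
  have := hX.le_bus o y hξ
  constructor <;> (unfold gpb gp; linarith)

theorem stmt4 {X : Type*} [MetricSpace X] {δ : ℝ} (hδ : 0 ≤ δ) (hX : IsGromovHyp X δ)
    (o : X) (ξ : ℕ → X) (hξ : IsGromovSeq o ξ) :
    ∀ x y : X,
      gpb o ξ x y - 10 * δ ≤ gp o x y - gpPt o o x ξ - gpPt o o y ξ ∧
      gp o x y - gpPt o o x ξ - gpPt o o y ξ ≤ gpb o ξ x y + 10 * δ :=
  stmt4_general hX o ξ hξ
end
end
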